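/- Let L be a free R-lattice (R = ℤ_(p)C_p) with an R-valued Hermitian form h (with respect to the canonical involution), and let B = (1/p)·Tr_reg ∘ h be the associated ℤ_(p)-valued σ-invariant bilinear form. Then the Hermitian dual lattice of L with respect to h coincides with the dual lattice of L with respect to B. In particular, the dual of a free R-lattice with R-basis (g₁, ..., g_a) is again free, with the Hermitian dual basis (g₁*, ..., g_a*) as an R-basis. -/

import Mathlib

open scoped BigOperators

set_option synthInstance.maxHeartbeats 1000000
set_option maxHeartbeats 1000000

abbrev Cp (p : ℕ) := Multiplicative (ZMod p)

/-- The canonical involution of the group algebra, sending `σ^i` to `σ^{-i}`. -/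
noncomputable def conjQCp (p : ℕ) :
    MonoidAlgebra ℚ (Cp p) →+* MonoidAlgebra ℚ (Cp p) :=
  MonoidAlgebra.mapDomainRingHom ℚ (invMonoidHom : Cp p →* Cp p)

/-- The regular trace of the `p`-dimensional `ℚ`-algebra `ℚC_p`. -/
noncomputable def trReg (p : ℕ) (x : MonoidAlgebra ℚ (Cp p)) : ℚ :=
  LinearMap.trace ℚ (MonoidAlgebra ℚ (Cp p)) (LinearMap.mulLeft ℚ x)

/-- The bilinear form `b(x,y) = (1/p)·Tr_reg(x·ȳ)` on `ℚC_p`. -/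
noncomputable def formB (p : ℕ) (x y : MonoidAlgebra ℚ (Cp p)) : ℚ :=
  (p : ℚ)⁻¹ * trReg p (x * conjQCp p y)


def Zsub (p : ℕ) [Fact p.Prime] : Subring ℚ where
  carrier := {x : ℚ | ¬ (p ∣ x.den)}
  zero_mem' := by simp [Nat.Prime.ne_one (Fact.out (p := p.Prime))]
  one_mem' := by simp [Nat.Prime.ne_one (Fact.out (p := p.Prime))]
  add_mem' := by
    intro a b ha hb hd
    rcases (Nat.Prime.dvd_mul (Fact.out (p := p.Prime))).1
      (hd.trans (Rat.add_den_dvd a b)) with h | h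
    exacts [ha h, hb h]
  mul_mem' := by
    intro a b ha hb hd
    rcases (Nat.Prime.dvd_mul (Fact.out (p := p.Prime))).1
      (hd.trans (Rat.mul_den_dvd a b)) with h | h
    exacts [ha h, hb h]
  neg_mem' := by intro a ha; simpa using ha

noncomputable instance zsubModule (p : ℕ) [Fact p.Prime] (V : Type*) [AddCommGroup V]
    [Module ℚ V] : Module (Zsub p) V :=
  Module.compHom V (algebraMap (Zsub p) ℚ)

/-- The standard lattice `R = ℤ_(p) C_p` inside `ℚC_p`, the `ℤ_(p)`-span of the
group elements. -/
noncomputable def Rlat (p : ℕ) [Fact p.Prime] :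
    Submodule (Zsub p) (MonoidAlgebra ℚ (Cp p)) :=
  Submodule.span (Zsub p) (Set.range (MonoidAlgebra.of ℚ (Cp p)))


/-- The Hermitian form on the free module `(ℚC_p)^a` determined by a Gram
matrix `G`: `h(x,y) = ∑ᵢⱼ xᵢ · conj(yⱼ) · Gᵢⱼ`. -/
noncomputable def hermForm (p : ℕ) (a : ℕ)
    (G : Matrix (Fin a) (Fin a) (MonoidAlgebra ℚ (Cp p)))
    (x y : Fin a → MonoidAlgebra ℚ (Cp p)) : MonoidAlgebra ℚ (Cp p) :=
  ∑ i, ∑ j, x i * conjQCp p (y j) * G i j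

/-! The coefficient of `1` in `z ∈ ℚC_p` is `(1/p) Tr_reg z`, and multiplying by `σ^{-g}` moves
the coefficient at `g` to `1`. Since the values `h(x, l)`, `l ∈ R^a`, form an `R`-module, they
all lie in `R` iff all their traces are `p`-integral.

Writing `h(x, y) = (x G) ⬝ ȳ`, the Hermitian dual of `R^a` is `{x | x G ∈ R^a} = R^a G⁻¹`. As
`G⁻¹` is again Hermitian, its rows satisfy `h(eᵢ, G⁻¹ⱼ) = δᵢⱼ`, so they are the dual basis. -/

open Matrix

section Hermitian

variable {A n : Type*} [CommRing A] [Fintype n] [DecidableEq n] (σ : A →+* A)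

theorem Matrix.nonsing_inv_map_eq_transpose {G : Matrix n n A} (hG : G.map σ = Gᵀ) :
    G⁻¹.map σ = G⁻¹ᵀ := by
  by_cases hdet : IsUnit G.det
  · have : G⁻¹.map σ * G.map σ = 1 := by
      rw [← Matrix.map_mul, nonsing_inv_mul G hdet, Matrix.map_one σ (map_zero σ) (map_one σ)]
    rw [transpose_nonsing_inv, ← hG, inv_eq_left_inv this]
  · simp [nonsing_inv_apply_not_isUnit G hdet]

theorem Matrix.single_vecMul_dotProduct_comp_nonsing_inv_row {G : Matrix n n A}
    (hG : G.map σ = Gᵀ) (hdet : IsUnit G.det) (i j : n) :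
    (Pi.single i 1 ᵥ* G) ⬝ᵥ (σ ∘ G⁻¹ j) = (1 : Matrix n n A) i j := by
  have hrow : σ ∘ G⁻¹ j = fun m => G⁻¹ m j :=
    funext fun m => congrFun₂ (nonsing_inv_map_eq_transpose σ hG) j m
  rw [single_vecMul, one_smul, hrow, ← mul_nonsing_inv G hdet, mul_apply', row]

theorem forall_dotProduct_comp_mem_iff (S : Subsemiring A) (hS : ∀ s ∈ S, σ s ∈ S)
    (v : n → A) : (∀ l : n → A, (∀ i, l i ∈ S) → v ⬝ᵥ (σ ∘ l) ∈ S) ↔ ∀ i, v i ∈ S := by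
  refine ⟨fun h i => ?_, fun h l hl => sum_mem fun i _ => mul_mem (h i) (hS _ (hl i))⟩
  have hσ : σ ∘ Pi.single i 1 = Pi.single i 1 := by
    ext j; simp [Pi.single_apply, apply_ite σ]
  simpa [hσ, dotProduct_single] using h (Pi.single i 1) fun j => by
    rcases eq_or_ne j i with rfl | hji
    · simp [S.one_mem]
    · simp [hji]

theorem Matrix.exists_eq_vecMul_nonsing_inv_iff {G : Matrix n n A} (hdet : IsUnit G.det)
    (S : Set A) (x : n → A) :
    (∃ c : n → A, (∀ i, c i ∈ S) ∧ x = c ᵥ* G⁻¹) ↔ ∀ i, (x ᵥ* G) i ∈ S := by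
  have hx : ∀ c : n → A, x = c ᵥ* G⁻¹ ↔ x ᵥ* G = c := fun c => by
    constructor <;> rintro rfl
    · rw [vecMul_vecMul, nonsing_inv_mul G hdet, vecMul_one]
    · rw [vecMul_vecMul, mul_nonsing_inv G hdet, vecMul_one]
  simp_rw [hx, exists_eq_right']

end Hermitian

theorem MonoidAlgebra.trace_mulLeft {k G : Type*} [CommRing k] [Group G] [Fintype G]
    [DecidableEq G] (x : MonoidAlgebra k G) :
    LinearMap.trace k (MonoidAlgebra k G) (LinearMap.mulLeft k x) =
      Fintype.card G * x.coeff 1 := by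
  rw [LinearMap.trace_eq_matrix_trace k (MonoidAlgebra.basis G k), Matrix.trace]
  have hdiag : ∀ g, (LinearMap.toMatrix (MonoidAlgebra.basis G k) (MonoidAlgebra.basis G k)
      (LinearMap.mulLeft k x)).diag g = x.coeff 1 := fun g => by
    rw [Matrix.diag, LinearMap.toMatrix_apply]
    change (x * MonoidAlgebra.single g 1).coeff g = _
    rw [MonoidAlgebra.coeff_mul_single_apply, mul_one, mul_inv_cancel]
  rw [Finset.sum_congr rfl fun g _ => hdiag g, Finset.sum_const, Finset.card_univ, nsmul_eq_mul]

section GroupAlgebra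

variable (p : ℕ) [Fact p.Prime]

theorem conjQCp_single (g : Cp p) (c : ℚ) :
    conjQCp p (MonoidAlgebra.single g c) = MonoidAlgebra.single g⁻¹ c := by
  simp [conjQCp, MonoidAlgebra.mapDomainRingHom]

theorem coeff_conjQCp (x : MonoidAlgebra ℚ (Cp p)) (g : Cp p) :
    (conjQCp p x).coeff g = x.coeff g⁻¹ := by
  change Finsupp.mapDomain (fun g : Cp p => g⁻¹) x.coeff g = _
  simpa using Finsupp.mapDomain_apply inv_injective x.coeff g⁻¹

theorem mem_Rlat_iff (x : MonoidAlgebra ℚ (Cp p)) :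
    x ∈ Rlat p ↔ ∀ g, x.coeff g ∈ Zsub p := by
  have hcoeff : ∀ (c : Cp p → Zsub p) g,
      (∑ h, c h • MonoidAlgebra.of ℚ (Cp p) h).coeff g = c g := by
    intro c g
    change (∑ h, (c h : ℚ) • MonoidAlgebra.single h (1 : ℚ)).coeff g = c g
    simp [Finsupp.single_apply]
  rw [Rlat, Submodule.mem_span_range_iff_exists_fun]
  refine ⟨by rintro ⟨c, rfl⟩ g; exact hcoeff c g ▸ (c g).2, fun hx => ⟨fun g => ⟨_, hx g⟩, ?_⟩⟩
  ext g
  exact hcoeff _ g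

theorem mul_mem_Rlat {x y : MonoidAlgebra ℚ (Cp p)} (hx : x ∈ Rlat p) (hy : y ∈ Rlat p) :
    x * y ∈ Rlat p := by
  classical
  rw [mem_Rlat_iff] at hx hy ⊢
  intro g
  rw [MonoidAlgebra.coeff_mul]
  exact sum_mem fun a _ => sum_mem fun b _ => by
    dsimp only
    split_ifs
    exacts [mul_mem (hx a) (hy b), zero_mem _]

theorem single_one_mem_Rlat (g : Cp p) : MonoidAlgebra.single g (1 : ℚ) ∈ Rlat p :=
  Submodule.subset_span ⟨g, rfl⟩

noncomputable def Rlat.toSubring : Subring (MonoidAlgebra ℚ (Cp p)) where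
  __ := (Rlat p).toAddSubgroup
  one_mem' := single_one_mem_Rlat p 1
  mul_mem' := mul_mem_Rlat p

theorem conjQCp_mem_Rlat {x : MonoidAlgebra ℚ (Cp p)} (hx : x ∈ Rlat p) :
    conjQCp p x ∈ Rlat p := by
  rw [mem_Rlat_iff] at hx ⊢
  exact fun g => coeff_conjQCp p x g ▸ hx g⁻¹

theorem inv_mul_trReg (x : MonoidAlgebra ℚ (Cp p)) : (p : ℚ)⁻¹ * trReg p x = x.coeff 1 := by
  classical
  have hp : (p : ℚ) ≠ 0 := Nat.cast_ne_zero.2 (Fact.out : p.Prime).ne_zero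
  rw [trReg, MonoidAlgebra.trace_mulLeft, Fintype.card_multiplicative, ZMod.card,
    inv_mul_cancel_left₀ hp]

end GroupAlgebra

section HermForm

variable (p : ℕ) [Fact p.Prime] (a : ℕ) (G : Matrix (Fin a) (Fin a) (MonoidAlgebra ℚ (Cp p)))

theorem hermForm_eq_vecMul_dotProduct (x y : Fin a → MonoidAlgebra ℚ (Cp p)) :
    hermForm p a G x y = (x ᵥ* G) ⬝ᵥ (conjQCp p ∘ y) := by
  simp only [hermForm, vecMul, dotProduct, Finset.sum_mul, Function.comp_apply]
  rw [Finset.sum_comm]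
  exact Finset.sum_congr rfl fun _ _ => Finset.sum_congr rfl fun _ _ => by ring

theorem hermForm_mul_right (x l : Fin a → MonoidAlgebra ℚ (Cp p)) (s : MonoidAlgebra ℚ (Cp p)) :
    hermForm p a G x (fun j => s * l j) = conjQCp p s * hermForm p a G x l := by
  simp only [hermForm, map_mul, Finset.mul_sum]
  exact Finset.sum_congr rfl fun _ _ => Finset.sum_congr rfl fun _ _ => by ring

theorem forall_hermForm_mem_Rlat_iff (x : Fin a → MonoidAlgebra ℚ (Cp p)) :
    (∀ l : Fin a → MonoidAlgebra ℚ (Cp p), (∀ i, l i ∈ Rlat p) → hermForm p a G x l ∈ Rlat p) ↔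
      ∀ l : Fin a → MonoidAlgebra ℚ (Cp p), (∀ i, l i ∈ Rlat p) →
        (hermForm p a G x l).coeff 1 ∈ Zsub p := by
  refine ⟨fun hx l hl => (mem_Rlat_iff p _).1 (hx l hl) 1, fun hx l hl => ?_⟩
  refine (mem_Rlat_iff p _).2 fun g => ?_
  have := hx _ fun i => mul_mem_Rlat p (single_one_mem_Rlat p g) (hl i)
  rwa [hermForm_mul_right, conjQCp_single, MonoidAlgebra.coeff_single_mul_apply, one_mul,
    inv_inv, mul_one] at this

end HermForm

theorem stmt14_general (p : ℕ) [Fact p.Prime] (a : ℕ)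
    (G : Matrix (Fin a) (Fin a) (MonoidAlgebra ℚ (Cp p)))
    (hGherm : ∀ i j, conjQCp p (G i j) = G j i)
    (hGunit : IsUnit G) :
    (∀ x : Fin a → MonoidAlgebra ℚ (Cp p),
      (∀ l : Fin a → MonoidAlgebra ℚ (Cp p), (∀ i, l i ∈ Rlat p) →
          hermForm p a G x l ∈ Rlat p) ↔
      (∀ l : Fin a → MonoidAlgebra ℚ (Cp p), (∀ i, l i ∈ Rlat p) →
          (p : ℚ)⁻¹ * trReg p (hermForm p a G x l) ∈ Zsub p)) ∧
    ∃ gstar : Fin a → (Fin a → MonoidAlgebra ℚ (Cp p)),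
      (∀ i j, hermForm p a G (Pi.single i 1) (gstar j) =
        if i = j then 1 else 0) ∧
      ∀ x : Fin a → MonoidAlgebra ℚ (Cp p),
        (∀ l : Fin a → MonoidAlgebra ℚ (Cp p), (∀ i, l i ∈ Rlat p) →
            hermForm p a G x l ∈ Rlat p) ↔
        ∃ c : Fin a → MonoidAlgebra ℚ (Cp p),
          (∀ i, c i ∈ Rlat p) ∧ x = ∑ i, c i • gstar i := by
  have hdet : IsUnit G.det := (isUnit_iff_isUnit_det G).1 hGunit
  have hherm : G.map (conjQCp p) = Gᵀ := Matrix.ext hGherm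
  refine ⟨fun x => by simp_rw [inv_mul_trReg, forall_hermForm_mem_Rlat_iff],
    (G⁻¹ : Matrix _ _ _), fun i j => ?_, fun x => ?_⟩
  · rw [hermForm_eq_vecMul_dotProduct,
      single_vecMul_dotProduct_comp_nonsing_inv_row _ hherm hdet, one_apply]
  · simp_rw [← vecMul_eq_sum, hermForm_eq_vecMul_dotProduct]
    exact (forall_dotProduct_comp_mem_iff (conjQCp p) (Rlat.toSubring p).toSubsemiring
      (fun _ => conjQCp_mem_Rlat p) _).trans
      (exists_eq_vecMul_nonsing_inv_iff hdet (Rlat p) x).symm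

/-- Let `L = R^a` be a free `R`-lattice (`R = ℤ_(p)C_p`) inside
`(ℚC_p)^a` with an `R`-valued Hermitian form `h` (given by a Hermitian Gram
matrix `G` with entries in `R`, nondegenerate), and let
`B = (1/p)·Tr_reg ∘ h` be the associated `ℤ_(p)`-valued `σ`-invariant bilinear
form. Then the Hermitian dual of `L` with respect to `h` coincides with the
dual lattice of `L` with respect to `B`; moreover this dual is again a free
`R`-lattice, with the Hermitian dual basis `(g₁*, …, g_a*)` (characterized by
`h(eᵢ, gⱼ*) = δᵢⱼ`) as an `R`-basis. -/
theorem stmt14 (p : ℕ) [Fact p.Prime] (a : ℕ)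
    (G : Matrix (Fin a) (Fin a) (MonoidAlgebra ℚ (Cp p)))
    (hGherm : ∀ i j, conjQCp p (G i j) = G j i)
    (hGR : ∀ i j, G i j ∈ Rlat p)
    (hGunit : IsUnit G) :
    (∀ x : Fin a → MonoidAlgebra ℚ (Cp p),
      (∀ l : Fin a → MonoidAlgebra ℚ (Cp p), (∀ i, l i ∈ Rlat p) →
          hermForm p a G x l ∈ Rlat p) ↔
      (∀ l : Fin a → MonoidAlgebra ℚ (Cp p), (∀ i, l i ∈ Rlat p) →
          (p : ℚ)⁻¹ * trReg p (hermForm p a G x l) ∈ Zsub p)) ∧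
    ∃ gstar : Fin a → (Fin a → MonoidAlgebra ℚ (Cp p)),
      (∀ i j, hermForm p a G (Pi.single i 1) (gstar j) =
        if i = j then 1 else 0) ∧
      ∀ x : Fin a → MonoidAlgebra ℚ (Cp p),
        (∀ l : Fin a → MonoidAlgebra ℚ (Cp p), (∀ i, l i ∈ Rlat p) →
            hermForm p a G x l ∈ Rlat p) ↔
        ∃ c : Fin a → MonoidAlgebra ℚ (Cp p),
          (∀ i, c i ∈ Rlat p) ∧ x = ∑ i, c i • gstar i :=
  stmt14_general p a G hGherm hGunit
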